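/- Let G be a k-hypergraph of dimension d, let 0 ≤ m ≤ k, and let a, b ∈ ℤ^d. If there exist an (m,a)-simple k-hypergraph and an (m,b)-simple k-hypergraph that are elements of Σ_ℤ(Eqs({G})), then there exists an (m, a+b)-simple k-hypergraph that is an element of Σ_ℤ(Eqs({G})). -/

import Mathlib

/-! An `(m, a)`-simple and an `(m, b)`-simple hypergraph differ only in where their frames
`A ∪ B ∪ C` sit in the data domain. Enumerating `C` increasingly, each frame is an injective
image of `Fin m ⊕ Fin m ⊕ Fin (2(k−m)−1)`, so a permutation of `ℕ` carries the second frame onto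
the first, respecting the labelling of `A` and `B`. Relabelling preserves `Σ_ℤ(Eqs {G})`, which is
a `ℤ`-submodule, and for a fixed frame the simplicity conditions are additive in the pair
(weight vector, hypergraph) because each `w_X` is. Hence the first hypergraph plus the relabelled
second one is `(m, a + b)`-simple. -/

/-- A hypergraph (of dimension `d`) over the data domain `ℕ`, represented by its
weight function: a finitely supported function from finite sets of data values
(potential hyperedges) to weight vectors in `ℤ^d`.  Isolated vertices are
irrelevant (hypergraphs are identified up to isolated vertices). -/
abbrev HG (d : ℕ) := (Finset ℕ) →₀ (Fin d → ℤ)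

/-- `H` is a `k`-hypergraph: every hyperedge (set with nonzero weight) has `k` elements. -/
def IsHG (k : ℕ) {d : ℕ} (H : HG d) : Prop := ∀ e ∈ H.support, e.card = k

/-- The (non-isolated) vertices of `H`: the union of its hyperedges. -/
def verts {d : ℕ} (H : HG d) : Finset ℕ := H.support.sup id

/-- The weight `w_X(H)` of a finite set `X`: the sum of the weights of all
hyperedges of `H` that contain `X`. -/
def weight {d : ℕ} (X : Finset ℕ) (H : HG d) : Fin d → ℤ :=
  ∑ e ∈ H.support.filter (fun e => X ⊆ e), H e
/-- Two hypergraphs are equivalent if (after discarding isolated vertices) they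
differ by a permutation of the data domain. -/
def HGEquiv {d : ℕ} (H₁ H₂ : HG d) : Prop :=
  ∃ π : ℕ ≃ ℕ, ∀ e : Finset ℕ, H₂ (e.image π) = H₁ e

/-- All hypergraphs equivalent to a member of the family `𝒢`. -/
def Eqs {d : ℕ} (𝒢 : Set (HG d)) : Set (HG d) := {H | ∃ G ∈ 𝒢, HGEquiv G H}

/-- `Σ_ℤ(𝒢)`: all finite `ℤ`-linear combinations of members of `𝒢`. -/
def Zsum {d : ℕ} (𝒢 : Set (HG d)) : Set (HG d) :=
  {H | ∃ (l : ℕ) (c : Fin l → ℤ) (F : Fin l → HG d),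
      (∀ i, F i ∈ 𝒢) ∧ H = ∑ i, c i • F i}
/-- `G` is an `(m, a)`-simple `k`-hypergraph:
its vertex set is (contained in) a disjoint union `A ∪ B ∪ C` with
`A = {α₁, …, α_m}`, `B = {β₁, …, β_m}` and `|C| = 2(k−m) − 1`
(`C = ∅` when `m = k`), such that
`w_X(G) = (−1)^{|B ∩ X|} · a` for every `X = {x₁, …, x_m}` with
`x_i ∈ {α_i, β_i}` for each `i`, `w_X(G) = 0` for every other `m`-element set
`X` of vertices, and `w_X(G) = 0` for every set `X` of vertices with
`|X| < m`. -/
def IsSimple {d : ℕ} (k m : ℕ) (a : Fin d → ℤ) (G : HG d) : Prop :=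
  ∃ (A B C : Finset ℕ) (α β : Fin m → ℕ),
    Function.Injective α ∧ Function.Injective β ∧
    A = Finset.image α Finset.univ ∧ B = Finset.image β Finset.univ ∧
    Disjoint A B ∧ Disjoint A C ∧ Disjoint B C ∧
    C.card = 2 * (k - m) - 1 ∧
    verts G ⊆ A ∪ B ∪ C ∧
    (∀ χ : Fin m → Bool,
      weight (Finset.image (fun i => if χ i then β i else α i) Finset.univ) G
        = ((-1 : ℤ) ^ (Finset.univ.filter (fun i => χ i = true)).card) • a) ∧
    (∀ X : Finset ℕ, X ⊆ A ∪ B ∪ C → X.card = m →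
        (∀ χ : Fin m → Bool,
          X ≠ Finset.image (fun i => if χ i then β i else α i) Finset.univ) →
        weight X G = 0) ∧
    (∀ X : Finset ℕ, X ⊆ A ∪ B ∪ C → X.card < m → weight X G = 0)

/-- `S` is a simplification of the family `𝒢`: for every `0 ≤ m ≤ k` and every
vector `g` in the `ℤ`-span of the weights of `m`-element sets of vertices of
members of `𝒢`, the family `S` contains an `(m, g)`-simple `k`-hypergraph. -/
def IsSimplificationOf {d : ℕ} (k : ℕ) (S 𝒢 : Set (HG d)) : Prop :=
  ∀ m : ℕ, m ≤ k →
    ∀ g ∈ Submodule.span ℤ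
      {w : Fin d → ℤ | ∃ G ∈ 𝒢, ∃ X : Finset ℕ,
        X ⊆ verts G ∧ X.card = m ∧ w = weight X G},
      ∃ G' ∈ S, IsSimple k m g G'

/-- `S` is self-simplified: `S` is a simplification of `S` itself. -/
def SelfSimplified {d : ℕ} (k : ℕ) (S : Set (HG d)) : Prop :=
  IsSimplificationOf k S S

/-- `S` is simple for `𝒢`: `S` is self-simplified and a simplification of `𝒢`. -/
def SimpleFor {d : ℕ} (k : ℕ) (S 𝒢 : Set (HG d)) : Prop :=
  SelfSimplified k S ∧ IsSimplificationOf k S 𝒢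

section Hypergraph

variable {d : ℕ}

lemma mem_Zsum_iff_mem_span {𝒢 : Set (HG d)} {H : HG d} :
    H ∈ Zsum 𝒢 ↔ H ∈ Submodule.span ℤ 𝒢 := by
  rw [Submodule.mem_span_set']
  constructor
  · rintro ⟨l, c, F, hF, rfl⟩
    exact ⟨l, c, fun i => ⟨F i, hF i⟩, rfl⟩
  · rintro ⟨l, c, F, rfl⟩
    exact ⟨l, c, fun i => F i, fun i => (F i).2, rfl⟩

lemma add_mem_Zsum {𝒢 : Set (HG d)} {H₁ H₂ : HG d} (h₁ : H₁ ∈ Zsum 𝒢) (h₂ : H₂ ∈ Zsum 𝒢) :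
    H₁ + H₂ ∈ Zsum 𝒢 := by
  rw [mem_Zsum_iff_mem_span] at *
  exact add_mem h₁ h₂

lemma weight_eq_sum (X : Finset ℕ) (H : HG d) :
    weight X H = H.sum fun e w => if X ⊆ e then w else 0 := by
  rw [weight, Finset.sum_filter, Finsupp.sum]

lemma weight_add (X : Finset ℕ) (H₁ H₂ : HG d) :
    weight X (H₁ + H₂) = weight X H₁ + weight X H₂ := by
  simp only [weight_eq_sum]
  exact Finsupp.sum_add_index' (fun _ => ite_self 0) fun _ _ _ => ite_add_zero

lemma verts_add_subset (H₁ H₂ : HG d) : verts (H₁ + H₂) ⊆ verts H₁ ∪ verts H₂ := by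
  classical
  exact (Finset.sup_mono Finsupp.support_add).trans_eq Finset.sup_union

lemma IsHG.add {k : ℕ} {H₁ H₂ : HG d} (h₁ : IsHG k H₁) (h₂ : IsHG k H₂) : IsHG k (H₁ + H₂) :=
  fun e he => (Finset.mem_union.mp (Finsupp.support_add he)).elim (h₁ e) (h₂ e)

section Relabel

noncomputable def relabel (π : ℕ ≃ ℕ) : HG d →ₗ[ℤ] HG d :=
  Finsupp.lmapDomain (Fin d → ℤ) ℤ (Finset.image π)

variable (π : ℕ ≃ ℕ)

lemma relabel_apply_image (H : HG d) (e : Finset ℕ) : relabel π H (e.image π) = H e :=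
  Finsupp.mapDomain_apply (Finset.image_injective π.injective) H e

lemma support_relabel (H : HG d) : (relabel π H).support = H.support.image (Finset.image π) :=
  Finsupp.mapDomain_support_of_injective (Finset.image_injective π.injective) H

lemma weight_relabel (X : Finset ℕ) (H : HG d) :
    weight (X.image π) (relabel π H) = weight X H := by
  classical
  rw [weight, support_relabel, Finset.filter_image,
    Finset.sum_image fun _ _ _ _ h => Finset.image_injective π.injective h]
  simp only [Finset.image_subset_image_iff π.injective, relabel_apply_image]
  rfl

lemma verts_relabel (H : HG d) : verts (relabel π H) = (verts H).image π := by
  classical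
  ext x
  simp only [verts, support_relabel, Finset.sup_image, Finset.mem_sup, Function.comp_apply, id,
    Finset.mem_image]
  grind

lemma IsHG.relabel {k : ℕ} {H : HG d} (h : IsHG k H) : IsHG k (relabel π H) := by
  intro e he
  rw [support_relabel] at he
  obtain ⟨e₀, he₀, rfl⟩ := Finset.mem_image.mp he
  rw [Finset.card_image_of_injective _ π.injective, h e₀ he₀]

lemma HGEquiv.relabel {G H : HG d} (h : HGEquiv G H) : HGEquiv G (relabel π H) := by
  obtain ⟨σ, hσ⟩ := h
  refine ⟨σ.trans π, fun e => ?_⟩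
  rw [Equiv.coe_trans, ← Finset.image_image, relabel_apply_image, hσ]

lemma relabel_mem_Zsum_Eqs {𝒢 : Set (HG d)} {H : HG d} (h : H ∈ Zsum (Eqs 𝒢)) :
    relabel π H ∈ Zsum (Eqs 𝒢) := by
  rw [mem_Zsum_iff_mem_span] at *
  refine (Submodule.span_le (p := (Submodule.span ℤ (Eqs 𝒢)).comap (relabel π))).mpr
    (fun F hF => ?_) h
  obtain ⟨G, hG, hGF⟩ := hF
  exact Submodule.subset_span ⟨G, hG, hGF.relabel π⟩

end Relabel

def transversal {m : ℕ} (α β : Fin m → ℕ) (χ : Fin m → Bool) : Finset ℕ :=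
  Finset.univ.image fun i => if χ i then β i else α i

lemma transversal_comp (π : ℕ ≃ ℕ) {m : ℕ} (α β : Fin m → ℕ) (χ : Fin m → Bool) :
    transversal (π ∘ α) (π ∘ β) χ = (transversal α β χ).image π := by
  classical
  simp only [transversal, Finset.image_image]
  congr 1
  ext i
  simp only [Function.comp_apply, apply_ite π]

structure IsSimpleFrame (k m : ℕ) (α β : Fin m → ℕ) (C : Finset ℕ) : Prop where
  injective_left : Function.Injective α
  injective_right : Function.Injective β
  disjoint_left_right : Disjoint (Finset.univ.image α) (Finset.univ.image β)
  disjoint_left_C : Disjoint (Finset.univ.image α) C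
  disjoint_right_C : Disjoint (Finset.univ.image β) C
  card_C : C.card = 2 * (k - m) - 1

structure IsSimpleOn (m : ℕ) (a : Fin d → ℤ) (α β : Fin m → ℕ) (C : Finset ℕ) (H : HG d) :
    Prop where
  verts_subset : verts H ⊆ Finset.univ.image α ∪ Finset.univ.image β ∪ C
  weight_transversal : ∀ χ : Fin m → Bool,
    weight (transversal α β χ) H = ((-1 : ℤ) ^ (Finset.univ.filter (fun i => χ i = true)).card) • a
  weight_of_card_eq : ∀ X ⊆ Finset.univ.image α ∪ Finset.univ.image β ∪ C, X.card = m →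
    (∀ χ, X ≠ transversal α β χ) → weight X H = 0
  weight_of_card_lt : ∀ X ⊆ Finset.univ.image α ∪ Finset.univ.image β ∪ C, X.card < m →
    weight X H = 0

lemma isSimple_iff {k m : ℕ} {a : Fin d → ℤ} {H : HG d} :
    IsSimple k m a H ↔ ∃ α β C, IsSimpleFrame k m α β C ∧ IsSimpleOn m a α β C H := by
  constructor
  · rintro ⟨_, _, C, α, β, hα, hβ, rfl, rfl, hAB, hAC, hBC, hC, hV, hX, hX', hX''⟩
    exact ⟨α, β, C, ⟨hα, hβ, hAB, hAC, hBC, hC⟩, ⟨hV, hX, hX', hX''⟩⟩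
  · rintro ⟨α, β, C, ⟨hα, hβ, hAB, hAC, hBC, hC⟩, ⟨hV, hX, hX', hX''⟩⟩
    exact ⟨_, _, C, α, β, hα, hβ, rfl, rfl, hAB, hAC, hBC, hC, hV, hX, hX', hX''⟩

namespace IsSimpleOn

variable {m : ℕ} {α β : Fin m → ℕ} {C : Finset ℕ}

lemma add {a b : Fin d → ℤ} {H₁ H₂ : HG d} (h₁ : IsSimpleOn m a α β C H₁)
    (h₂ : IsSimpleOn m b α β C H₂) : IsSimpleOn m (a + b) α β C (H₁ + H₂) where
  verts_subset :=
    (verts_add_subset H₁ H₂).trans (Finset.union_subset h₁.verts_subset h₂.verts_subset)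
  weight_transversal χ := by
    rw [weight_add, h₁.weight_transversal, h₂.weight_transversal, smul_add]
  weight_of_card_eq X hX hcard hχ := by
    rw [weight_add, h₁.weight_of_card_eq X hX hcard hχ, h₂.weight_of_card_eq X hX hcard hχ,
      add_zero]
  weight_of_card_lt X hX hcard := by
    rw [weight_add, h₁.weight_of_card_lt X hX hcard, h₂.weight_of_card_lt X hX hcard, add_zero]

lemma relabel {a : Fin d → ℤ} {H : HG d} (h : IsSimpleOn m a α β C H) (π : ℕ ≃ ℕ) :
    IsSimpleOn m a (π ∘ α) (π ∘ β) (C.image π) (relabel π H) := by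
  classical
  have hV : Finset.univ.image (π ∘ α) ∪ Finset.univ.image (π ∘ β) ∪ C.image π =
      (Finset.univ.image α ∪ Finset.univ.image β ∪ C).image π := by
    simp only [Finset.image_union, Finset.image_image]
  refine ⟨?_, fun χ => ?_, fun X hX hcard hχ => ?_, fun X hX hcard => ?_⟩
  · rw [verts_relabel, hV]
    exact Finset.image_subset_image h.verts_subset
  · rw [transversal_comp, weight_relabel, h.weight_transversal]
  all_goals
    rw [hV, Finset.subset_image_iff] at hX
    obtain ⟨Y, hY, rfl⟩ := hX
    rw [Finset.card_image_of_injective _ π.injective] at hcard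
    rw [weight_relabel]
  · exact h.weight_of_card_eq Y hY hcard fun χ hYχ => hχ χ (by rw [hYχ, transversal_comp])
  · exact h.weight_of_card_lt Y hY hcard

end IsSimpleOn

lemma exists_equiv_comp_eq {ι α : Type*} [Finite ι] [Infinite α] {f g : ι → α}
    (hf : Function.Injective f) (hg : Function.Injective g) : ∃ π : α ≃ α, ⇑π ∘ g = f := by
  let e : Set.range g ↪ α := (Equiv.ofInjective g hg).symm.toEmbedding.trans ⟨f, hf⟩
  have hcard : Cardinal.mk (Set.range g) < Cardinal.mk α :=
    (Cardinal.lt_aleph0_of_finite _).trans_le (Cardinal.aleph0_le_mk α)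
  obtain ⟨π, hπ⟩ := Cardinal.extend_function_of_lt e hcard ⟨Equiv.refl α⟩
  refine ⟨π, funext fun i => ?_⟩
  simp [hπ ⟨g i, i, rfl⟩, e, Equiv.ofInjective_symm_apply]

namespace IsSimpleFrame

variable {k m : ℕ} {α β : Fin m → ℕ} {C : Finset ℕ}

lemma injective_sumElim (h : IsSimpleFrame k m α β C) :
    Function.Injective (Sum.elim α (Sum.elim β (C.orderEmbOfFin h.card_C))) := by
  have mem_image {γ : Fin m → ℕ} (i : Fin m) : γ i ∈ Finset.univ.image γ :=
    Finset.mem_image_of_mem γ (Finset.mem_univ i)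
  refine h.injective_left.sumElim
    (h.injective_right.sumElim (C.orderEmbOfFin h.card_C).injective ?_) ?_
  · exact fun i j => Finset.disjoint_left.mp h.disjoint_right_C (mem_image i)
      |>.imp fun hij => hij ▸ C.orderEmbOfFin_mem h.card_C j
  · rintro i (j | j)
    · exact Finset.disjoint_left.mp h.disjoint_left_right (mem_image i) |>.imp (· ▸ mem_image j)
    · exact Finset.disjoint_left.mp h.disjoint_left_C (mem_image i)
        |>.imp fun hij => hij ▸ C.orderEmbOfFin_mem h.card_C j

lemma exists_equiv {α' β' : Fin m → ℕ} {C' : Finset ℕ} (h : IsSimpleFrame k m α β C)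
    (h' : IsSimpleFrame k m α' β' C') :
    ∃ π : ℕ ≃ ℕ, ⇑π ∘ α' = α ∧ ⇑π ∘ β' = β ∧ C'.image π = C := by
  classical
  obtain ⟨π, hπ⟩ := exists_equiv_comp_eq h.injective_sumElim h'.injective_sumElim
  refine ⟨π, funext fun i => congrFun hπ (.inl i), funext fun i => congrFun hπ (.inr (.inl i)), ?_⟩
  have hC : ⇑π ∘ C'.orderEmbOfFin h'.card_C = C.orderEmbOfFin h.card_C :=
    funext fun i => congrFun hπ (.inr (.inr i))
  rw [← C'.image_orderEmbOfFin_univ h'.card_C, Finset.image_image, hC,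
    C.image_orderEmbOfFin_univ]

end IsSimpleFrame

end Hypergraph

theorem simple_sum_is_simple_general
    (k d m : ℕ)
    (G : HG d) (a b : Fin d → ℤ)
    (ha : ∃ Sa ∈ Zsum (Eqs {G}), IsHG k Sa ∧ IsSimple k m a Sa)
    (hb : ∃ Sb ∈ Zsum (Eqs {G}), IsHG k Sb ∧ IsSimple k m b Sb) :
    ∃ Sc ∈ Zsum (Eqs {G}), IsHG k Sc ∧ IsSimple k m (a + b) Sc := by
  obtain ⟨Sa, hSa, hka, hsa⟩ := ha
  obtain ⟨Sb, hSb, hkb, hsb⟩ := hb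
  obtain ⟨α, β, C, hframe, hsa⟩ := isSimple_iff.mp hsa
  obtain ⟨α', β', C', hframe', hsb⟩ := isSimple_iff.mp hsb
  obtain ⟨π, rfl, rfl, rfl⟩ := hframe.exists_equiv hframe'
  exact ⟨Sa + relabel π Sb, add_mem_Zsum hSa (relabel_mem_Zsum_Eqs π hSb),
    hka.add (hkb.relabel π), isSimple_iff.mpr ⟨_, _, _, hframe, hsa.add (hsb.relabel π)⟩⟩

/-- **Lemma (sum of simple hypergraphs is simple).**
Let `G` be a `k`-hypergraph of dimension `d`, let `0 ≤ m ≤ k` and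
`a, b ∈ ℤ^d`.  If there exist an `(m, a)`-simple `k`-hypergraph and an
`(m, b)`-simple `k`-hypergraph that are elements of `Σ_ℤ(Eqs({G}))`, then
there exists an `(m, a+b)`-simple `k`-hypergraph that is an element of
`Σ_ℤ(Eqs({G}))`. -/
theorem simple_sum_is_simple
    (k d m : ℕ) (hk : 1 ≤ k) (hd : 1 ≤ d) (hm : m ≤ k)
    (G : HG d) (hG : IsHG k G) (a b : Fin d → ℤ)
    (ha : ∃ Sa ∈ Zsum (Eqs {G}), IsHG k Sa ∧ IsSimple k m a Sa)
    (hb : ∃ Sb ∈ Zsum (Eqs {G}), IsHG k Sb ∧ IsSimple k m b Sb) :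
    ∃ Sc ∈ Zsum (Eqs {G}), IsHG k Sc ∧ IsSimple k m (a + b) Sc :=
  simple_sum_is_simple_general k d m G a b ha hb
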